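/- For every real ν > 2 and all real p > 0, q > 0, r > 0, ∫_0^∞ ∫_0^∞ ∫_0^∞ (xyz)^{(ν−2)/2} / (xy + xz + yz)^{(ν+1)/2} · e^{−px − qy − rz} dx dy dz = (8π·Γ(ν/2 + 1) / (ν(ν−1)(ν−2))) · (√p + √q + √r)^{2−ν}. -/

import Mathlib

/-!
Since `xy + xz + yz = xyz S` with `S = 1/x + 1/y + 1/z`, the integrand equals
`(xyz)^(-3/2) S^(-(ν+1)/2) e^(-px-qy-rz)`, and the Gamma integral
`S^(-(ν+1)/2) = 2/Γ((ν+1)/2) ∫₀^∞ t^ν e^(-S t²) dt` separates the variables: for fixed `t` the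
integrand is a product of kernels `x^(-3/2) e^(-t²/x - px)`. Substituting `x = u²` and then
`u ↦ √p u - t/u` (Glasser's trick) shows that each kernel integrates to `(√π/t) e^(-2t√p)`, so by
Tonelli the triple integral is `2/Γ((ν+1)/2) π^(3/2) ∫₀^∞ t^(ν-3) e^(-2σt) dt` with
`σ = √p + √q + √r`, again a Gamma integral; Legendre's duplication formula turns the constant into
the stated one. Working with lower integrals of nonnegative functions, Tonelli needs no
integrability, and finiteness of the final value identifies the iterated Bochner integrals.
-/

open MeasureTheory Set Real
open scoped ENNReal

section Glasser

variable {a b : ℝ}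

lemma image_mul_sub_div_Ioi (ha : 0 < a) (hb : 0 < b) :
    (fun x : ℝ => a * x - b / x) '' Ioi 0 = univ := by
  refine eq_univ_of_forall fun t => ?_
  set D := √(t ^ 2 + 4 * (a * b))
  have hD : D ^ 2 = t ^ 2 + 4 * (a * b) := sq_sqrt (by positivity)
  have ht : |t| < D := by
    rw [← sqrt_sq_eq_abs]
    exact sqrt_lt_sqrt (sq_nonneg t) (by nlinarith)
  have hpos : 0 < t + D := by linarith [neg_abs_le t]
  refine ⟨(t + D) / (2 * a), div_pos hpos (by positivity), ?_⟩
  field_simp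
  nlinarith

lemma lintegral_ofReal_exp_neg_sq :
    ∫⁻ t : ℝ, ENNReal.ofReal (exp (-t ^ 2)) = ENNReal.ofReal √π := by
  rw [← ofReal_integral_eq_lintegral_ofReal (by simpa using integrable_exp_neg_mul_sq one_pos)
    (ae_of_all _ fun t => (exp_pos _).le)]
  congr 1
  simpa using integral_gaussian 1

lemma lintegral_Ioi_add_div_sq_mul_exp (ha : 0 < a) (hb : 0 < b) :
    ∫⁻ x in Ioi 0, ENNReal.ofReal ((a + b / x ^ 2) * exp (-(a * x - b / x) ^ 2))
      = ENNReal.ofReal √π := by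
  have hderiv : ∀ x ∈ Ioi (0 : ℝ),
      HasDerivWithinAt (fun x => a * x - b / x) (a + b / x ^ 2) (Ioi 0) x := by
    intro x hx
    have := ((hasDerivAt_id' x).const_mul a).sub ((hasDerivAt_inv (ne_of_gt hx)).const_mul b)
    simp only [mul_one, mul_neg, sub_neg_eq_add, ← div_eq_mul_inv] at this
    exact this.hasDerivWithinAt
  have hmono : MonotoneOn (fun x : ℝ => a * x - b / x) (Ioi 0) := fun x hx y hy hxy => by
    have : b / y ≤ b / x := div_le_div_of_nonneg_left hb.le hx hxy
    dsimp only; nlinarith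
  have := lintegral_image_eq_lintegral_deriv_mul_of_monotoneOn measurableSet_Ioi hderiv hmono
    fun t => ENNReal.ofReal (exp (-t ^ 2))
  rw [image_mul_sub_div_Ioi ha hb, Measure.restrict_univ, lintegral_ofReal_exp_neg_sq] at this
  rw [this]
  refine setLIntegral_congr_fun measurableSet_Ioi fun x hx => ?_
  have : 0 < x := hx
  rw [ENNReal.ofReal_mul (by positivity)]

-- `x ↦ b / (a x)` is an involution of `(0, ∞)` that negates `a x - b / x`.
lemma lintegral_Ioi_mul_exp_eq_div_sq_mul_exp (ha : 0 < a) (hb : 0 < b) :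
    ∫⁻ x in Ioi 0, ENNReal.ofReal (a * exp (-(a * x - b / x) ^ 2))
      = ∫⁻ x in Ioi 0, ENNReal.ofReal (b / x ^ 2 * exp (-(a * x - b / x) ^ 2)) := by
  have hc : 0 < b / a := div_pos hb ha
  have hderiv : ∀ x ∈ Ioi (0 : ℝ),
      HasDerivWithinAt (fun x => b / a / x) (-(b / a / x ^ 2)) (Ioi 0) x := by
    intro x hx
    have := (hasDerivAt_inv (ne_of_gt hx)).const_mul (b / a)
    simp only [mul_neg, ← div_eq_mul_inv] at this
    exact this.hasDerivWithinAt
  have hanti : AntitoneOn (fun x : ℝ => b / a / x) (Ioi 0) := fun x hx y _ hxy =>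
    div_le_div_of_nonneg_left hc.le hx hxy
  have himage : (fun x : ℝ => b / a / x) '' Ioi 0 = Ioi 0 := by
    ext t
    refine ⟨?_, fun ht => ⟨b / a / t, div_pos hc ht, div_div_cancel₀ hc.ne'⟩⟩
    rintro ⟨x, hx, rfl⟩
    exact div_pos hc hx
  have := lintegral_image_eq_lintegral_deriv_mul_of_antitoneOn measurableSet_Ioi hderiv hanti
    fun x => ENNReal.ofReal (a * exp (-(a * x - b / x) ^ 2))
  rw [himage] at this
  rw [this]
  refine setLIntegral_congr_fun measurableSet_Ioi fun x hx => ?_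
  have : 0 < x := hx
  rw [← ENNReal.ofReal_mul (by rw [neg_neg]; positivity)]
  congr 1
  have : a * (b / a / x) - b / (b / a / x) = -(a * x - b / x) := by field_simp; ring
  rw [this, neg_sq]
  field_simp

lemma lintegral_Ioi_div_sq_mul_exp (ha : 0 < a) (hb : 0 < b) :
    ∫⁻ x in Ioi 0, ENNReal.ofReal (b / x ^ 2 * exp (-(a * x - b / x) ^ 2))
      = ENNReal.ofReal (√π / 2) := by
  have hsum : (∫⁻ x in Ioi 0, ENNReal.ofReal (b / x ^ 2 * exp (-(a * x - b / x) ^ 2)))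
      + ∫⁻ x in Ioi 0, ENNReal.ofReal (b / x ^ 2 * exp (-(a * x - b / x) ^ 2))
      = ENNReal.ofReal (√π / 2) + ENNReal.ofReal (√π / 2) := by
    rw [← ENNReal.ofReal_add (by positivity) (by positivity), add_halves,
      ← lintegral_Ioi_add_div_sq_mul_exp ha hb]
    nth_rw 1 [← lintegral_Ioi_mul_exp_eq_div_sq_mul_exp ha hb]
    rw [← lintegral_add_left
      (f := fun x => ENNReal.ofReal (a * exp (-(a * x - b / x) ^ 2))) (by fun_prop)]
    refine setLIntegral_congr_fun measurableSet_Ioi fun x hx => ?_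
    have : 0 < x := hx
    rw [← ENNReal.ofReal_add (by positivity) (by positivity), add_mul]
  rw [← two_mul, ← two_mul] at hsum
  exact (ENNReal.mul_right_inj two_ne_zero ENNReal.ofNat_ne_top).1 hsum

end Glasser

lemma lintegral_Ioi_rpow_mul_exp_neg_div_sub_mul {c t : ℝ} (hc : 0 < c) (ht : 0 < t) :
    ∫⁻ x in Ioi 0, ENNReal.ofReal (x ^ (-(3 / 2) : ℝ) * exp (-(t ^ 2 / x) - c * x))
      = ENNReal.ofReal (√π / t * exp (-(2 * t * √c))) := by
  have hderiv : ∀ u ∈ Ioi (0 : ℝ), HasDerivWithinAt (fun u => u ^ 2) (2 * u) (Ioi 0) u :=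
    fun u _ => by simpa using (hasDerivAt_pow 2 u).hasDerivWithinAt
  have hmono : MonotoneOn (fun u : ℝ => u ^ 2) (Ioi 0) := fun u hu v _ huv =>
    pow_le_pow_left₀ (le_of_lt hu) huv 2
  have himage : (fun u : ℝ => u ^ 2) '' Ioi 0 = Ioi 0 := by
    ext x
    refine ⟨?_, fun hx => ⟨√x, sqrt_pos.2 hx, sq_sqrt (le_of_lt hx)⟩⟩
    rintro ⟨u, hu, rfl⟩
    exact pow_pos (mem_Ioi.1 hu) 2
  have := lintegral_image_eq_lintegral_deriv_mul_of_monotoneOn measurableSet_Ioi hderiv hmono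
    fun x => ENNReal.ofReal (x ^ (-(3 / 2) : ℝ) * exp (-(t ^ 2 / x) - c * x))
  rw [himage] at this
  rw [this]
  have hpt : ∀ u ∈ Ioi (0 : ℝ), ENNReal.ofReal (2 * u) *
      ENNReal.ofReal ((u ^ 2) ^ (-(3 / 2) : ℝ) * exp (-(t ^ 2 / u ^ 2) - c * u ^ 2))
      = ENNReal.ofReal (2 / t * exp (-(2 * t * √c)))
        * ENNReal.ofReal (t / u ^ 2 * exp (-(√c * u - t / u) ^ 2)) := by
    intro u hu
    have hu : 0 < u := hu
    have hrpow : (u ^ 2) ^ (-(3 / 2) : ℝ) = (u ^ 3)⁻¹ := by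
      rw [← rpow_natCast u 2, ← rpow_mul hu.le, ← rpow_natCast, ← rpow_neg hu.le]
      norm_num
    have hexp : -(t ^ 2 / u ^ 2) - c * u ^ 2 = -(√c * u - t / u) ^ 2 + -(2 * t * √c) := by
      field_simp
      linear_combination u ^ 4 * sq_sqrt hc.le
    rw [← ENNReal.ofReal_mul (by positivity), ← ENNReal.ofReal_mul (by positivity), hrpow, hexp,
      exp_add]
    congr 1
    field_simp
  rw [setLIntegral_congr_fun measurableSet_Ioi hpt, lintegral_const_mul' _ _ ENNReal.ofReal_ne_top,
    lintegral_Ioi_div_sq_mul_exp (sqrt_pos.2 hc) ht, ← ENNReal.ofReal_mul (by positivity)]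
  congr 1
  field_simp

lemma lintegral_Ioi_rpow_mul_exp_neg_mul_rpow {p q b : ℝ} (hp : 0 < p) (hq : -1 < q) (hb : 0 < b) :
    ∫⁻ x in Ioi 0, ENNReal.ofReal (x ^ q * exp (-b * x ^ p))
      = ENNReal.ofReal (b ^ (-(q + 1) / p) * (1 / p) * Gamma ((q + 1) / p)) := by
  rw [← integral_rpow_mul_exp_neg_mul_rpow hp hq hb, ofReal_integral_eq_lintegral_ofReal
    (integrableOn_rpow_mul_exp_neg_mul_rpow hq hp hb)]
  filter_upwards [ae_restrict_mem measurableSet_Ioi] with x hx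
  have : 0 < x := hx
  positivity

section Tonelli

variable {α β γ δ : Type*} [MeasurableSpace α] [MeasurableSpace β] [MeasurableSpace γ]
  [MeasurableSpace δ] {μ : Measure α} {μ₁ : Measure β} {μ₂ : Measure γ} {μ₃ : Measure δ}

lemma lintegral_lintegral_mul_swap [SFinite μ] [SFinite μ₁] {g : α → ℝ≥0∞} {u : α → β → ℝ≥0∞}
    (hg : Measurable g) (hu : Measurable (Function.uncurry u)) :
    ∫⁻ x, ∫⁻ s, g s * u s x ∂μ ∂μ₁ = ∫⁻ s, g s * ∫⁻ x, u s x ∂μ₁ ∂μ := by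
  rw [lintegral_lintegral_swap
    ((hg.comp measurable_snd).mul (hu.comp measurable_swap)).aemeasurable]
  exact lintegral_congr fun s => lintegral_const_mul _ (hu.comp measurable_prodMk_left)

lemma lintegral_lintegral_lintegral_lintegral_mul [SFinite μ] [SFinite μ₁] [SFinite μ₂]
    [SFinite μ₃] {g : α → ℝ≥0∞} {u : α → β → ℝ≥0∞} {v : α → γ → ℝ≥0∞} {w : α → δ → ℝ≥0∞}
    (hg : Measurable g) (hu : Measurable (Function.uncurry u))
    (hv : Measurable (Function.uncurry v)) (hw : Measurable (Function.uncurry w)) :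
    ∫⁻ z, ∫⁻ y, ∫⁻ x, ∫⁻ s, g s * u s x * v s y * w s z ∂μ ∂μ₁ ∂μ₂ ∂μ₃
      = ∫⁻ s, g s * (∫⁻ x, u s x ∂μ₁) * (∫⁻ y, v s y ∂μ₂) * (∫⁻ z, w s z ∂μ₃) ∂μ := by
  have hv' (y : γ) : Measurable fun s => v s y := hv.comp measurable_prodMk_right
  have hw' (z : δ) : Measurable fun s => w s z := hw.comp measurable_prodMk_right
  have hU : Measurable fun s => ∫⁻ x, u s x ∂μ₁ := hu.lintegral_prod_right'
  have hV : Measurable fun s => ∫⁻ y, v s y ∂μ₂ := hv.lintegral_prod_right'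
  calc ∫⁻ z, ∫⁻ y, ∫⁻ x, ∫⁻ s, g s * u s x * v s y * w s z ∂μ ∂μ₁ ∂μ₂ ∂μ₃
      = ∫⁻ z, ∫⁻ y, ∫⁻ s, g s * (∫⁻ x, u s x ∂μ₁) * w s z * v s y ∂μ ∂μ₂ ∂μ₃ := by
        refine lintegral_congr fun z => lintegral_congr fun y =>
          (lintegral_congr fun x => lintegral_congr fun s => ?_).trans
          ((lintegral_lintegral_mul_swap (g := fun s => g s * v s y * w s z)
            ((hg.mul (hv' y)).mul (hw' z)) hu).trans (lintegral_congr fun s => ?_)) <;> ring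
    _ = ∫⁻ z, ∫⁻ s, g s * (∫⁻ x, u s x ∂μ₁) * (∫⁻ y, v s y ∂μ₂) * w s z ∂μ ∂μ₃ := by
        refine lintegral_congr fun z =>
          (lintegral_lintegral_mul_swap (g := fun s => g s * (∫⁻ x, u s x ∂μ₁) * w s z)
            ((hg.mul hU).mul (hw' z)) hv).trans (lintegral_congr fun s => ?_)
        ring
    _ = _ := lintegral_lintegral_mul_swap (g := fun s => g s * (∫⁻ x, u s x ∂μ₁) * ∫⁻ y, v s y ∂μ₂)
          ((hg.mul hU).mul hV) hw

lemma integral_integral_integral_eq_toReal_lintegral [SFinite μ] [SFinite μ₁]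
    {f : α → β → γ → ℝ} (hf : Measurable fun p : α × β × γ => f p.1 p.2.1 p.2.2)
    (hf₀ : ∀ᵐ z ∂μ₂, ∀ᵐ y ∂μ₁, ∀ᵐ x ∂μ, 0 ≤ f x y z)
    (hfin : ∫⁻ z, ∫⁻ y, ∫⁻ x, ENNReal.ofReal (f x y z) ∂μ ∂μ₁ ∂μ₂ ≠ ∞) :
    ∫ z, ∫ y, ∫ x, f x y z ∂μ ∂μ₁ ∂μ₂
      = (∫⁻ z, ∫⁻ y, ∫⁻ x, ENNReal.ofReal (f x y z) ∂μ ∂μ₁ ∂μ₂).toReal := by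
  have hF : Measurable fun p : α × β × γ => ENNReal.ofReal (f p.1 p.2.1 p.2.2) :=
    ENNReal.measurable_ofReal.comp hf
  have hL₁ : Measurable fun q : β × γ => ∫⁻ x, ENNReal.ofReal (f x q.1 q.2) ∂μ :=
    hF.lintegral_prod_left'
  have hL₂ : Measurable fun z => ∫⁻ y, ∫⁻ x, ENNReal.ofReal (f x y z) ∂μ ∂μ₁ :=
    hL₁.lintegral_prod_left'
  have h₂ : ∀ᵐ z ∂μ₂, ∫ y, ∫ x, f x y z ∂μ ∂μ₁
      = (∫⁻ y, ∫⁻ x, ENNReal.ofReal (f x y z) ∂μ ∂μ₁).toReal := by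
    filter_upwards [hf₀, ae_lt_top hL₂ hfin] with z hz hz_fin
    have hLz : Measurable fun y => ∫⁻ x, ENNReal.ofReal (f x y z) ∂μ :=
      hL₁.comp measurable_prodMk_right
    rw [← integral_toReal hLz.aemeasurable (ae_lt_top hLz hz_fin.ne)]
    refine integral_congr_ae (hz.mono fun y hy => integral_eq_lintegral_of_nonneg_ae hy ?_)
    exact (hf.comp (measurable_prodMk_right (y := (y, z)))).aestronglyMeasurable
  rw [integral_congr_ae h₂, integral_toReal hL₂.aemeasurable (ae_lt_top hL₂ hfin)]

end Tonelli

lemma Gamma_half_add_one_div_eq {ν : ℝ} (hν : 2 < ν) :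
    Gamma (ν / 2 + 1) / (ν * (ν - 1) * (ν - 2))
      = 2 ^ (-ν) * √π * Gamma (ν - 2) / Gamma ((ν + 1) / 2) := by
  have hdup := Gamma_mul_Gamma_add_half (ν / 2)
  rw [show 2 * (ν / 2) = ν by ring, show ν / 2 + 1 / 2 = (ν + 1) / 2 by ring,
    show (1 : ℝ) - ν = 1 + -ν by ring, rpow_add two_pos, rpow_one] at hdup
  have hΓν : Gamma ν = (ν - 1) * ((ν - 2) * Gamma (ν - 2)) := by
    have h₁ := Gamma_add_one (show ν - 1 ≠ 0 by linarith)
    have h₂ := Gamma_add_one (show ν - 2 ≠ 0 by linarith)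
    rw [sub_add_cancel] at h₁
    rw [show ν - 2 + 1 = ν - 1 by ring] at h₂
    rw [h₁, h₂]
  have hΓ : 0 < Gamma ((ν + 1) / 2) := Gamma_pos_of_pos (by linarith)
  rw [Gamma_add_one (by positivity), eq_div_iff hΓ.ne']
  have : ν - 1 ≠ 0 := by linarith
  have : ν - 2 ≠ 0 := by linarith
  field_simp
  rw [hdup, hΓν]
  ring

lemma rpow_prod_div_rpow_sum_eq {ν x y z : ℝ} (hx : 0 < x) (hy : 0 < y) (hz : 0 < z) :
    (x * y * z) ^ ((ν - 2) / 2) / (x * y + x * z + y * z) ^ ((ν + 1) / 2)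
      = (x * y * z) ^ (-(3 / 2) : ℝ) * (1 / x + 1 / y + 1 / z) ^ (-(ν + 1) / 2) := by
  have hxyz : 0 < x * y * z := by positivity
  have hS : 0 < 1 / x + 1 / y + 1 / z := by positivity
  have hsum : x * y + x * z + y * z = x * y * z * (1 / x + 1 / y + 1 / z) := by
    field_simp; ring
  rw [hsum, mul_rpow hxyz.le hS.le, div_mul_eq_div_div, ← rpow_sub hxyz, div_eq_mul_inv,
    ← rpow_neg hS.le]
  congr 2 <;> ring

lemma ofReal_rpow_div_rpow_mul_exp_eq_lintegral {ν p q r x y z : ℝ} (hν : -1 < ν)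
    (hx : 0 < x) (hy : 0 < y) (hz : 0 < z) :
    ENNReal.ofReal ((x * y * z) ^ ((ν - 2) / 2) / (x * y + x * z + y * z) ^ ((ν + 1) / 2) *
        exp (-p * x - q * y - r * z))
      = ∫⁻ t in Ioi 0, ENNReal.ofReal (2 / Gamma ((ν + 1) / 2) * t ^ ν)
          * ENNReal.ofReal (x ^ (-(3 / 2) : ℝ) * exp (-(t ^ 2 / x) - p * x))
          * ENNReal.ofReal (y ^ (-(3 / 2) : ℝ) * exp (-(t ^ 2 / y) - q * y))
          * ENNReal.ofReal (z ^ (-(3 / 2) : ℝ) * exp (-(t ^ 2 / z) - r * z)) := by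
  have hS : 0 < 1 / x + 1 / y + 1 / z := by positivity
  have hΓ : 0 < Gamma ((ν + 1) / 2) := Gamma_pos_of_pos (by linarith)
  set A := 2 / Gamma ((ν + 1) / 2) * (x * y * z) ^ (-(3 / 2) : ℝ) * exp (-p * x - q * y - r * z)
  have hA : 0 ≤ A := by positivity
  have hpt : ∀ t ∈ Ioi (0 : ℝ), ENNReal.ofReal (2 / Gamma ((ν + 1) / 2) * t ^ ν)
          * ENNReal.ofReal (x ^ (-(3 / 2) : ℝ) * exp (-(t ^ 2 / x) - p * x))
          * ENNReal.ofReal (y ^ (-(3 / 2) : ℝ) * exp (-(t ^ 2 / y) - q * y))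
          * ENNReal.ofReal (z ^ (-(3 / 2) : ℝ) * exp (-(t ^ 2 / z) - r * z))
        = ENNReal.ofReal A
          * ENNReal.ofReal (t ^ ν * exp (-(1 / x + 1 / y + 1 / z) * t ^ (2 : ℝ))) := by
    intro t ht
    have ht : 0 < t := ht
    rw [← ENNReal.ofReal_mul (by positivity), ← ENNReal.ofReal_mul (by positivity),
      ← ENNReal.ofReal_mul (by positivity), ← ENNReal.ofReal_mul hA]
    congr 1
    have hexp : exp (-(t ^ 2 / x) - p * x) * exp (-(t ^ 2 / y) - q * y) * exp (-(t ^ 2 / z) - r * z)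
        = exp (-p * x - q * y - r * z) * exp (-(1 / x + 1 / y + 1 / z) * t ^ (2 : ℝ)) := by
      rw [← exp_add, ← exp_add, ← exp_add, rpow_two]
      congr 1
      ring
    simp only [A, mul_rpow (mul_pos hx hy).le hz.le, mul_rpow hx.le hy.le]
    linear_combination (2 / Gamma ((ν + 1) / 2) * t ^ ν * x ^ (-(3 / 2) : ℝ) * y ^ (-(3 / 2) : ℝ)
      * z ^ (-(3 / 2) : ℝ)) * hexp
  rw [setLIntegral_congr_fun measurableSet_Ioi hpt, lintegral_const_mul' _ _ ENNReal.ofReal_ne_top,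
    lintegral_Ioi_rpow_mul_exp_neg_mul_rpow two_pos hν hS, ← ENNReal.ofReal_mul hA,
    rpow_prod_div_rpow_sum_eq hx hy hz]
  congr 1
  simp only [A]
  field_simp

lemma lintegral_Ioi_rpow_mul_laplace_kernels {ν p q r : ℝ} (hν : 2 < ν) (hp : 0 < p) (hq : 0 < q)
    (hr : 0 < r) :
    ∫⁻ t in Ioi 0, ENNReal.ofReal (2 / Gamma ((ν + 1) / 2) * t ^ ν)
        * ENNReal.ofReal (√π / t * exp (-(2 * t * √p)))
        * ENNReal.ofReal (√π / t * exp (-(2 * t * √q)))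
        * ENNReal.ofReal (√π / t * exp (-(2 * t * √r)))
      = ENNReal.ofReal (8 * π * Gamma (ν / 2 + 1) / (ν * (ν - 1) * (ν - 2)) *
          (√p + √q + √r) ^ (2 - ν)) := by
  have hσ : 0 < √p + √q + √r := by positivity
  have hC : 0 ≤ 2 / Gamma ((ν + 1) / 2) * √π ^ 3 :=
    mul_nonneg (div_nonneg zero_le_two (Gamma_pos_of_pos (by linarith)).le) (by positivity)
  have hpt : ∀ t ∈ Ioi (0 : ℝ), ENNReal.ofReal (2 / Gamma ((ν + 1) / 2) * t ^ ν)
        * ENNReal.ofReal (√π / t * exp (-(2 * t * √p)))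
        * ENNReal.ofReal (√π / t * exp (-(2 * t * √q)))
        * ENNReal.ofReal (√π / t * exp (-(2 * t * √r)))
      = ENNReal.ofReal (2 / Gamma ((ν + 1) / 2) * √π ^ 3)
        * ENNReal.ofReal (t ^ (ν - 3) * exp (-(2 * (√p + √q + √r)) * t ^ (1 : ℝ))) := by
    intro t ht
    have ht : 0 < t := ht
    rw [← ENNReal.ofReal_mul (by positivity), ← ENNReal.ofReal_mul (by positivity),
      ← ENNReal.ofReal_mul (by positivity), ← ENNReal.ofReal_mul hC]
    congr 1
    have hexp : exp (-(2 * t * √p)) * exp (-(2 * t * √q)) * exp (-(2 * t * √r))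
        = exp (-(2 * (√p + √q + √r)) * t) := by
      rw [← exp_add, ← exp_add]; ring_nf
    rw [rpow_one, rpow_sub ht, rpow_ofNat, ← hexp]
    field_simp
  rw [setLIntegral_congr_fun measurableSet_Ioi hpt, lintegral_const_mul' _ _ ENNReal.ofReal_ne_top,
    lintegral_Ioi_rpow_mul_exp_neg_mul_rpow one_pos (by linarith) (by positivity),
    ← ENNReal.ofReal_mul hC, mul_div_assoc, Gamma_half_add_one_div_eq hν]
  congr 1
  have h2 : (2 : ℝ) ^ (2 - ν) = 4 * 2 ^ (-ν) := by
    rw [sub_eq_add_neg, rpow_add two_pos]; norm_num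
  rw [show -(ν - 3 + 1) / 1 = 2 - ν by ring, show (ν - 3 + 1) / 1 = ν - 2 by ring,
    mul_rpow two_pos.le hσ.le, h2]
  field_simp
  linear_combination 8 * Gamma (ν - 2) * sq_sqrt pi_pos.le

lemma lintegral_triple_laplace {ν p q r : ℝ} (hν : 2 < ν) (hp : 0 < p) (hq : 0 < q) (hr : 0 < r) :
    ∫⁻ z in Ioi 0, ∫⁻ y in Ioi 0, ∫⁻ x in Ioi 0, ENNReal.ofReal
        ((x * y * z) ^ ((ν - 2) / 2) / (x * y + x * z + y * z) ^ ((ν + 1) / 2) *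
          exp (-p * x - q * y - r * z))
      = ENNReal.ofReal (8 * π * Gamma (ν / 2 + 1) / (ν * (ν - 1) * (ν - 2)) *
          (√p + √q + √r) ^ (2 - ν)) := by
  calc _ = ∫⁻ z in Ioi 0, ∫⁻ y in Ioi 0, ∫⁻ x in Ioi 0, ∫⁻ t in Ioi 0,
          ENNReal.ofReal (2 / Gamma ((ν + 1) / 2) * t ^ ν)
          * ENNReal.ofReal (x ^ (-(3 / 2) : ℝ) * exp (-(t ^ 2 / x) - p * x))
          * ENNReal.ofReal (y ^ (-(3 / 2) : ℝ) * exp (-(t ^ 2 / y) - q * y))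
          * ENNReal.ofReal (z ^ (-(3 / 2) : ℝ) * exp (-(t ^ 2 / z) - r * z)) :=
        setLIntegral_congr_fun measurableSet_Ioi fun z hz =>
          setLIntegral_congr_fun measurableSet_Ioi fun y hy =>
            setLIntegral_congr_fun measurableSet_Ioi fun x hx =>
              ofReal_rpow_div_rpow_mul_exp_eq_lintegral (by linarith) hx hy hz
    _ = ∫⁻ t in Ioi 0, ENNReal.ofReal (2 / Gamma ((ν + 1) / 2) * t ^ ν)
          * (∫⁻ x in Ioi 0, ENNReal.ofReal (x ^ (-(3 / 2) : ℝ) * exp (-(t ^ 2 / x) - p * x)))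
          * (∫⁻ y in Ioi 0, ENNReal.ofReal (y ^ (-(3 / 2) : ℝ) * exp (-(t ^ 2 / y) - q * y)))
          * ∫⁻ z in Ioi 0, ENNReal.ofReal (z ^ (-(3 / 2) : ℝ) * exp (-(t ^ 2 / z) - r * z)) :=
        lintegral_lintegral_lintegral_lintegral_mul (by fun_prop) (by fun_prop) (by fun_prop)
          (by fun_prop)
    _ = _ := by
        rw [← lintegral_Ioi_rpow_mul_laplace_kernels hν hp hq hr]
        refine setLIntegral_congr_fun measurableSet_Ioi fun t (ht : 0 < t) => ?_
        rw [lintegral_Ioi_rpow_mul_exp_neg_div_sub_mul hp ht,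
          lintegral_Ioi_rpow_mul_exp_neg_div_sub_mul hq ht,
          lintegral_Ioi_rpow_mul_exp_neg_div_sub_mul hr ht]

/-- A three-dimensional Laplace transform (Prudnikov, Vol. 4, 3.2.3.2). -/
theorem triple_laplace_example (ν p q r : ℝ) (hν : 2 < ν)
    (hp : 0 < p) (hq : 0 < q) (hr : 0 < r) :
    ∫ z : ℝ in Ioi 0, ∫ y : ℝ in Ioi 0, ∫ x : ℝ in Ioi 0,
        (x * y * z) ^ ((ν - 2) / 2) / (x * y + x * z + y * z) ^ ((ν + 1) / 2) *
          Real.exp (-p * x - q * y - r * z)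
      = 8 * Real.pi * Real.Gamma (ν / 2 + 1) / (ν * (ν - 1) * (ν - 2)) *
        (Real.sqrt p + Real.sqrt q + Real.sqrt r) ^ (2 - ν) := by
  have hmeas : Measurable fun w : ℝ × ℝ × ℝ =>
      (w.1 * w.2.1 * w.2.2) ^ ((ν - 2) / 2) /
        (w.1 * w.2.1 + w.1 * w.2.2 + w.2.1 * w.2.2) ^ ((ν + 1) / 2) *
          exp (-p * w.1 - q * w.2.1 - r * w.2.2) := by
    fun_prop
  have hnonneg : ∀ᵐ z ∂volume.restrict (Ioi 0), ∀ᵐ y ∂volume.restrict (Ioi 0),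
      ∀ᵐ x ∂volume.restrict (Ioi (0 : ℝ)), 0 ≤ (x * y * z) ^ ((ν - 2) / 2) /
        (x * y + x * z + y * z) ^ ((ν + 1) / 2) * exp (-p * x - q * y - r * z) := by
    filter_upwards [ae_restrict_mem measurableSet_Ioi] with z (hz : 0 < z)
    filter_upwards [ae_restrict_mem measurableSet_Ioi] with y (hy : 0 < y)
    filter_upwards [ae_restrict_mem measurableSet_Ioi] with x (hx : 0 < x)
    positivity
  have hν₁ : 0 < ν - 1 := by linarith
  have hν₂ : 0 < ν - 2 := by linarith
  rw [integral_integral_integral_eq_toReal_lintegral hmeas hnonneg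
      (by rw [lintegral_triple_laplace hν hp hq hr]; exact ENNReal.ofReal_ne_top),
    lintegral_triple_laplace hν hp hq hr, ENNReal.toReal_ofReal (by positivity)]
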